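/- arXiv:2004.06398 — 3 statements merged into one kernel-verified Lean document; each statement's English description precedes it below -/
import Mathlib

section
/- For every formula A of the modal language with a single unary modality □ that contains at most the propositional variable p: if GL proves A, then IL proves A†, where A† is the closed interpretability formula obtained from A by the translation †. -/
/-- Formulas of the modal language with a single unary modality `□`.
Variable number `0` plays the role of the propositional variable `p`. -/
inductive GLForm : Type
  | bot : GLForm
  | var : ℕ → GLForm
  | imp : GLForm → GLForm → GLForm
  | box : GLForm → GLForm

namespace GLForm

/-- `¬A` abbreviates `A → ⊥`. -/
def neg (A : GLForm) : GLForm := A.imp .bot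

/-- `⊤` abbreviates `¬⊥`. -/
def top : GLForm := neg .bot

/-- `◇A` abbreviates `¬□¬A`. -/
def dia (A : GLForm) : GLForm := (A.neg.box).neg

/-- `A` contains at most the propositional variable `p` (i.e. variable number `0`). -/
def onlyP : GLForm → Prop
  | bot => True
  | var n => n = 0
  | imp A B => A.onlyP ∧ B.onlyP
  | box A => A.onlyP

end GLForm

/-- `A` is a propositional tautology: it is true under every assignment of truth
values to formulas which evaluates `⊥` as false and respects implication (so
boxed formulas are treated as atoms). -/
def GLTaut (A : GLForm) : Prop :=
  ∀ v : GLForm → Prop, (v .bot ↔ False) →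
    (∀ B C : GLForm, v (B.imp C) ↔ (v B → v C)) → v A

/-- Provability in Gödel–Löb's logic `GL`: all propositional tautologies, the
distribution axiom, Löb's axiom, and the rules modus ponens and necessitation. -/
inductive GLProv : GLForm → Prop
  | taut {A : GLForm} : GLTaut A → GLProv A
  | distr (A B : GLForm) : GLProv (((A.imp B).box).imp ((A.box).imp B.box))
  | lob (A : GLForm) : GLProv ((((A.box).imp A).box).imp A.box)
  | mp {A B : GLForm} : GLProv (A.imp B) → GLProv A → GLProv B
  | nec {A : GLForm} : GLProv A → GLProv A.box

/-- Formulas of the interpretability language: a unary modality `□` and a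
binary modality `▷`. -/
inductive ILForm : Type
  | bot : ILForm
  | var : ℕ → ILForm
  | imp : ILForm → ILForm → ILForm
  | box : ILForm → ILForm
  | rhd : ILForm → ILForm → ILForm

namespace ILForm

/-- `¬A` abbreviates `A → ⊥`. -/
def neg (A : ILForm) : ILForm := A.imp .bot

/-- `⊤` abbreviates `¬⊥`. -/
def top : ILForm := neg .bot

/-- `◇A` abbreviates `¬□¬A`. -/
def dia (A : ILForm) : ILForm := (A.neg.box).neg

/-- `A ∧ B` abbreviates `¬(A → ¬B)`. -/
def conj (A B : ILForm) : ILForm := (A.imp B.neg).neg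

/-- `A ∨ B` abbreviates `¬A → B`. -/
def disj (A B : ILForm) : ILForm := (A.neg).imp B

/-- `A ↔ B` abbreviates `(A → B) ∧ (B → A)`. -/
def iffF (A B : ILForm) : ILForm := (A.imp B).conj (B.imp A)

/-- `A` is closed, i.e. contains no propositional variables. -/
def closed : ILForm → Prop
  | bot => True
  | var _ => False
  | imp A B => A.closed ∧ B.closed
  | box A => A.closed
  | rhd A B => A.closed ∧ B.closed

end ILForm

/-- `A` is a propositional tautology in the interpretability language. -/
def ILTaut (A : ILForm) : Prop :=
  ∀ v : ILForm → Prop, (v .bot ↔ False) →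
    (∀ B C : ILForm, v (B.imp C) ↔ (v B → v C)) → v A

/-- Provability in the basic interpretability logic `IL`: all propositional
tautologies, the GL axioms, J1–J5, modus ponens and necessitation. -/
inductive ILProv : ILForm → Prop
  | taut {A : ILForm} : ILTaut A → ILProv A
  | distr (A B : ILForm) : ILProv (((A.imp B).box).imp ((A.box).imp B.box))
  | lob (A : ILForm) : ILProv ((((A.box).imp A).box).imp A.box)
  | J1 (A B : ILForm) : ILProv (((A.imp B).box).imp (A.rhd B))
  | J2 (A B C : ILForm) : ILProv (((A.rhd B).conj (B.rhd C)).imp (A.rhd C))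
  | J3 (A B C : ILForm) : ILProv (((A.rhd C).conj (B.rhd C)).imp ((A.disj B).rhd C))
  | J4 (A B : ILForm) : ILProv ((A.rhd B).imp ((A.dia).imp B.dia))
  | J5 (A : ILForm) : ILProv ((A.dia).rhd A)
  | mp {A B : ILForm} : ILProv (A.imp B) → ILProv A → ILProv B
  | nec {A : ILForm} : ILProv A → ILProv A.box

/-- The translation of the variable `p`: the formula `◇◇⊤ → (⊤ ▷ ◇⊤)`. -/
def pDag : ILForm := (ILForm.top.dia.dia).imp (ILForm.top.rhd ILForm.top.dia)

/-- The translation `†` of one-variable `GL`-formulas into closed `IL`-formulas: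
`⊥† = ⊥`, `p† = ◇◇⊤ → (⊤ ▷ ◇⊤)`, `(A→B)† = A† → B†`, `(□A)† = □(◇◇⊤ → A†)`. -/
def dag : GLForm → ILForm
  | .bot => .bot
  | .var _ => pDag
  | .imp A B => (dag A).imp (dag B)
  | .box A => ((ILForm.top.dia.dia).imp (dag A)).box

/-! For any formula `E`, the relativized box `□(E → ·)` is again a normal modality
satisfying Löb's axiom in `IL`: distribution and necessitation relativize propositionally, and
Löb's axiom for `□(E → ·)` at `X` follows from Löb's axiom for `□` at `E → X`. The translation
`†` commutes with `⊥` and `→` and reads `□` as `□(◇◇⊤ → ·)`, so induction on `GL`-derivations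
goes through. -/

namespace ILForm

def relBox (E A : ILForm) : ILForm := (E.imp A).box

end ILForm

namespace ILProv

lemma box_mono {A B : ILForm} (h : ILProv (A.imp B)) : ILProv (A.box.imp B.box) :=
  mp (distr A B) (nec h)

lemma imp_trans {A B C : ILForm} (hAB : ILProv (A.imp B)) (hBC : ILProv (B.imp C)) :
    ILProv (A.imp C) := by
  have t : ILTaut ((A.imp B).imp ((B.imp C).imp (A.imp C))) := by
    intro v _ himp
    simp only [himp]
    tauto
  exact mp (mp (taut t) hAB) hBC

variable (E : ILForm)

lemma relBox_nec {A : ILForm} (h : ILProv A) : ILProv (E.relBox A) := by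
  have t : ILTaut (A.imp (E.imp A)) := by
    intro v _ himp
    simp only [himp]
    tauto
  exact nec (mp (taut t) h)

lemma relBox_distr (A B : ILForm) :
    ILProv ((E.relBox (A.imp B)).imp ((E.relBox A).imp (E.relBox B))) := by
  have t : ILTaut ((E.imp (A.imp B)).imp ((E.imp A).imp (E.imp B))) := by
    intro v _ himp
    simp only [himp]
    tauto
  exact imp_trans (box_mono (taut t)) (distr (E.imp A) (E.imp B))

lemma relBox_lob (A : ILForm) :
    ILProv ((E.relBox ((E.relBox A).imp A)).imp (E.relBox A)) := by
  have t : ILTaut ((E.imp ((E.relBox A).imp A)).imp ((E.relBox A).imp (E.imp A))) := by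
    intro v _ himp
    simp only [himp]
    tauto
  exact imp_trans (box_mono (taut t)) (lob (E.imp A))

end ILProv

lemma GLTaut.map {f : GLForm → ILForm} (hbot : f .bot = .bot)
    (himp : ∀ A B, f (A.imp B) = (f A).imp (f B)) {A : GLForm} (h : GLTaut A) :
    ILTaut (f A) := by
  intro v hv hvimp
  exact h (v ∘ f) (by simpa [hbot] using hv) (fun B C => by simpa [himp] using hvimp (f B) (f C))

theorem GLProv.map_of_relBox {f : GLForm → ILForm} (E : ILForm) (hbot : f .bot = .bot)
    (himp : ∀ A B, f (A.imp B) = (f A).imp (f B)) (hbox : ∀ A, f A.box = E.relBox (f A))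
    {A : GLForm} (h : GLProv A) : ILProv (f A) := by
  induction h with
  | taut hA => exact .taut (hA.map hbot himp)
  | distr A B => simpa only [hbox, himp] using ILProv.relBox_distr E (f A) (f B)
  | lob A => simpa only [hbox, himp] using ILProv.relBox_lob E (f A)
  | mp _ _ ihAB ihA => exact .mp (himp _ _ ▸ ihAB) ihA
  | nec _ ihA => exact hbox _ ▸ ILProv.relBox_nec E ihA

theorem GL_proves_implies_IL_proves_dag_general (A : GLForm)
    (h : GLProv A) : ILProv (dag A) :=
  GLProv.map_of_relBox ILForm.top.dia.dia rfl (fun _ _ => rfl) (fun _ => rfl) h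

/-- If a formula `A` of the modal language with a single unary modality `□`
contains at most the propositional variable `p` and `GL ⊢ A`, then `IL ⊢ A†`. -/
theorem GL_proves_implies_IL_proves_dag (A : GLForm) (hA : A.onlyP)
    (h : GLProv A) : ILProv (dag A) :=
  GL_proves_implies_IL_proves_dag_general A h
end

section
/- For every formula A of the modal language with a single unary modality □ that contains at most the propositional variable p: if IL proves A†, then GL proves A, where A† is the closed interpretability formula obtained from A by the translation †. -/
/-!
If `GL ⊬ A`, completeness of `GL` for finite strict orders (via the finite canonical model
on the subformulas of `A`) yields a countermodel. Attaching a small gadget to each of its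
worlds turns it into a Veltman model in which `◇◇⊤` holds exactly at the original worlds and
`p†` holds at an original world exactly when `p` does; hence `A†` is refuted there too, and
`IL ⊬ A†` by soundness of `IL` for Veltman frames.
-/

deriving instance DecidableEq for GLForm

namespace GLForm

def subformulas : GLForm → Finset GLForm
  | bot => {bot}
  | var n => {var n}
  | imp B C => insert (imp B C) (B.subformulas ∪ C.subformulas)
  | box B => insert (box B) B.subformulas

theorem mem_subformulas_self (A : GLForm) : A ∈ A.subformulas := by
  cases A <;> simp [subformulas]

theorem subformulas_subset_of_mem {A B : GLForm} (h : B ∈ A.subformulas) :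
    B.subformulas ⊆ A.subformulas := by
  induction A with
  | bot | var => simp_all [subformulas]
  | imp A₁ A₂ ih₁ ih₂ =>
    simp only [subformulas, Finset.mem_insert, Finset.mem_union] at h
    rcases h with rfl | h | h
    · rfl
    · exact (ih₁ h).trans (Finset.subset_union_left.trans (Finset.subset_insert _ _))
    · exact (ih₂ h).trans (Finset.subset_union_right.trans (Finset.subset_insert _ _))
  | box A ih =>
    simp only [subformulas, Finset.mem_insert] at h
    rcases h with rfl | h
    · rfl
    · exact (ih h).trans (Finset.subset_insert _ _)

theorem mem_subformulas_of_imp_mem {A B C : GLForm} (h : B.imp C ∈ A.subformulas) :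
    B ∈ A.subformulas ∧ C ∈ A.subformulas :=
  ⟨subformulas_subset_of_mem h (by simp [subformulas, mem_subformulas_self]),
    subformulas_subset_of_mem h (by simp [subformulas, mem_subformulas_self])⟩

theorem mem_subformulas_of_box_mem {A B : GLForm} (h : B.box ∈ A.subformulas) :
    B ∈ A.subformulas :=
  subformulas_subset_of_mem h (by simp [subformulas, mem_subformulas_self])

@[simp]
theorem neg_inj {A B : GLForm} : A.neg = B.neg ↔ A = B := by
  simp [neg]

def Holds {W : Type} (R : W → W → Prop) (V : W → ℕ → Prop) : W → GLForm → Prop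
  | _, bot => False
  | w, var n => V w n
  | w, imp B C => Holds R V w B → Holds R V w C
  | w, box B => ∀ u, R w u → Holds R V u B

def TautCons (Γ : Finset GLForm) (Y : GLForm) : Prop :=
  ∀ v : GLForm → Prop, (v bot ↔ False) → (∀ B C, v (imp B C) ↔ (v B → v C)) →
    (∀ C ∈ Γ, v C) → v Y

theorem foldr_imp_iff {v : GLForm → Prop} (hv : ∀ B C, v (imp B C) ↔ (v B → v C))
    (L : List GLForm) (Y : GLForm) : v (L.foldr imp Y) ↔ ((∀ C ∈ L, v C) → v Y) := by
  induction L with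
  | nil => simp
  | cons B L ih => simp only [List.foldr_cons, hv, ih, List.forall_mem_cons]; tauto

end GLForm

open GLForm

theorem GLProv.of_tautCons {Ps : Finset GLForm} {Y : GLForm} (hPs : ∀ P ∈ Ps, GLProv P)
    (h : TautCons Ps Y) : GLProv Y := by
  induction Ps using Finset.induction_on generalizing Y with
  | empty => exact GLProv.taut fun v hb hi => h v hb hi (by simp)
  | insert P Ps _ ih =>
    refine GLProv.mp (ih (fun Q hQ => hPs Q (Finset.mem_insert_of_mem hQ)) ?_)
      (hPs P (Finset.mem_insert_self P Ps))
    intro v hb hi hPs'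
    rw [hi]
    intro hP
    exact h v hb hi (by simpa [hP] using hPs')

theorem GLProv.box_mono {A B : GLForm} (h : GLProv (A.imp B)) : GLProv (A.box.imp B.box) :=
  (GLProv.distr A B).mp h.nec

theorem GLProv.box_imp_box_box (C : GLForm) : GLProv (C.box.imp C.box.box) := by
  -- Löb's axiom applied to `X = C ∧ □C`.
  set X := (C.imp C.box.neg).neg
  have hXC : GLProv (X.box.imp C.box) :=
    GLProv.box_mono (GLProv.taut fun v hb hi => by simp only [X, neg, hi, hb]; tauto)
  have hXBC : GLProv (X.box.imp C.box.box) :=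
    GLProv.box_mono (GLProv.taut fun v hb hi => by simp only [X, neg, hi, hb]; tauto)
  have hCX : GLProv (C.imp (X.box.imp X)) :=
    GLProv.of_tautCons (Ps := {X.box.imp C.box}) (by simpa using hXC)
      fun v hb hi h => by
        simp only [X, neg, hi, hb, Finset.mem_singleton, forall_eq] at h ⊢
        tauto
  refine GLProv.of_tautCons (Ps :=
    {C.box.imp (X.box.imp X).box, (X.box.imp X).box.imp X.box, X.box.imp C.box.box}) ?_ ?_
  · simp only [Finset.mem_insert, Finset.mem_singleton, forall_eq_or_imp, forall_eq]
    exact ⟨GLProv.box_mono hCX, GLProv.lob X, hXBC⟩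
  · intro v hb hi h
    simp only [Finset.mem_insert, Finset.mem_singleton, forall_eq_or_imp, forall_eq, hi] at h ⊢
    tauto

def GLDerives (Γ : Finset GLForm) (Y : GLForm) : Prop :=
  GLProv (Γ.toList.foldr GLForm.imp Y)

def GLConsistent (Γ : Finset GLForm) : Prop :=
  ¬ GLDerives Γ .bot

namespace GLDerives

variable {Γ Δ : Finset GLForm} {X Y : GLForm}

theorem of_tautCons (h : TautCons Γ Y) : GLDerives Γ Y :=
  GLProv.taut fun v hb hi => (foldr_imp_iff hi _ _).2 fun hΓ => h v hb hi (by simpa using hΓ)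

theorem of_mem (h : Y ∈ Γ) : GLDerives Γ Y :=
  of_tautCons fun _ _ _ hΓ => hΓ Y h

theorem empty_iff : GLDerives ∅ Y ↔ GLProv Y := by
  simp [GLDerives]

theorem trans (hΔ : ∀ C ∈ Δ, GLDerives Γ C) (h : GLDerives Δ Y) : GLDerives Γ Y := by
  refine GLProv.of_tautCons
    (Ps := insert (Δ.toList.foldr GLForm.imp Y) (Δ.image (Γ.toList.foldr GLForm.imp))) ?_ ?_
  · simpa [GLDerives] using And.intro h hΔ
  · intro v _ hi hPs
    simp only [Finset.mem_insert, Finset.mem_image, forall_eq_or_imp, forall_exists_index,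
      and_imp, forall_apply_eq_imp_iff₂, foldr_imp_iff hi, Finset.mem_toList] at hPs ⊢
    exact fun hΓ => hPs.1 fun C hC => hPs.2 C hC hΓ

theorem of_provable (h : GLProv Y) : GLDerives Γ Y :=
  trans (Δ := ∅) (by simp) (empty_iff.2 h)

theorem mp (h₁ : GLDerives Γ (X.imp Y)) (h₂ : GLDerives Γ X) : GLDerives Γ Y :=
  trans (Δ := {X.imp Y, X}) (by simp [h₁, h₂]) <|
    of_tautCons fun v _ hi h => by simp_all

theorem insert_iff : GLDerives (insert X Γ) Y ↔ GLDerives Γ (X.imp Y) := by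
  constructor <;> intro h <;>
    refine GLProv.of_tautCons (Ps := {_}) (by simpa only [Finset.mem_singleton, forall_eq]) ?_ <;>
    intro v _ hi h <;>
    simp only [Finset.mem_singleton, forall_eq, foldr_imp_iff hi, Finset.mem_toList,
      Finset.mem_insert, forall_eq_or_imp, hi] at h ⊢ <;>
    tauto

theorem box (h : GLDerives Γ Y) : GLDerives (Γ.image GLForm.box) Y.box := by
  induction Γ using Finset.induction_on generalizing Y with
  | empty => simpa [empty_iff] using (empty_iff.1 h).nec
  | insert X Γ _ ih =>
    rw [Finset.image_insert, insert_iff]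
    exact (of_provable (GLProv.distr X Y)).mp (ih (insert_iff.1 h))

end GLDerives

namespace GLConsistent

theorem singleton_neg {A : GLForm} (h : ¬ GLProv A) : GLConsistent {A.neg} := by
  intro hA
  refine h (GLProv.of_tautCons (Ps := {A.neg.neg}) ?_ ?_)
  · simpa [GLDerives, neg] using hA
  · intro v hb hi h
    simp only [Finset.mem_singleton, forall_eq, neg, hi, hb] at h
    tauto

theorem insert_or_insert_neg {Γ : Finset GLForm} (h : GLConsistent Γ) (B : GLForm) :
    GLConsistent (insert B Γ) ∨ GLConsistent (insert B.neg Γ) := by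
  by_contra! hB
  exact h ((GLDerives.insert_iff.1 (not_not.1 hB.2)).mp
    (GLDerives.insert_iff.1 (not_not.1 hB.1)))

end GLConsistent

namespace GLForm

@[ext]
structure CanonicalWorld (Φ : Finset GLForm) where
  carrier : Finset GLForm
  subset : carrier ⊆ Φ ∪ Φ.image neg
  consistent : GLConsistent carrier
  complete : ∀ B ∈ Φ, B ∈ carrier ∨ B.neg ∈ carrier

namespace CanonicalWorld

variable {Φ : Finset GLForm}

instance : Finite (CanonicalWorld Φ) :=
  Finite.of_injective
    (fun w => (⟨w.carrier, Finset.mem_powerset.2 w.subset⟩ : (Φ ∪ Φ.image neg).powerset))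
    fun _ _ h => CanonicalWorld.ext (congrArg Subtype.val h)

def R (w u : CanonicalWorld Φ) : Prop :=
  (∀ C : GLForm, C.box ∈ w.carrier → C.box ∈ u.carrier ∧ C ∈ u.carrier) ∧
    ∃ C : GLForm, C.box ∈ u.carrier ∧ C.box ∉ w.carrier

instance : IsTrans (CanonicalWorld Φ) R :=
  ⟨fun _ _ _ ⟨h₁, C, hCu, hCw⟩ ⟨h₂, _⟩ =>
    ⟨fun D hD => h₂ D (h₁ D hD).1, C, (h₂ C hCu).1, hCw⟩⟩

instance : Std.Irrefl (R (Φ := Φ)) :=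
  ⟨fun _ ⟨_, _, hC, hC'⟩ => hC' hC⟩

variable {B : GLForm}

theorem not_mem_of_neg_mem (w : CanonicalWorld Φ) (h : B.neg ∈ w.carrier) : B ∉ w.carrier :=
  fun hB => w.consistent ((GLDerives.of_mem h).mp (GLDerives.of_mem hB))

theorem mem_of_derives (w : CanonicalWorld Φ) (hB : B ∈ Φ) (h : GLDerives w.carrier B) :
    B ∈ w.carrier :=
  (w.complete B hB).resolve_right fun hn => w.consistent ((GLDerives.of_mem hn).mp h)

theorem box_mem_of_mem (w : CanonicalWorld Φ) (h : B.box ∈ w.carrier) : B.box ∈ Φ := by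
  simpa [neg] using w.subset h

theorem exists_superset {Γ : Finset GLForm} (hΓ : Γ ⊆ Φ ∪ Φ.image neg)
    (hc : GLConsistent Γ) :
    ∃ w : CanonicalWorld Φ, Γ ⊆ w.carrier := by
  classical
  obtain ⟨Δ, hΓΔ, hΔ⟩ := Finset.exists_le_maximal
    ((Φ ∪ Φ.image neg).powerset.filter GLConsistent)
    (Finset.mem_filter.2 ⟨Finset.mem_powerset.2 hΓ, hc⟩)
  simp only [Finset.mem_filter, Finset.mem_powerset] at hΔ
  obtain ⟨⟨hΔΦ, hΔc⟩, hΔmax⟩ := hΔ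
  have hmem (C : GLForm) (hC : C ∈ Φ ∪ Φ.image neg) (h : GLConsistent (insert C Δ)) :
      C ∈ Δ :=
    hΔmax ⟨Finset.insert_subset hC hΔΦ, h⟩ (Finset.subset_insert _ _)
      (Finset.mem_insert_self _ _)
  refine ⟨⟨Δ, hΔΦ, hΔc, fun B hB => ?_⟩, hΓΔ⟩
  exact (hΔc.insert_or_insert_neg B).imp (hmem B (by simp [hB])) (hmem _ (by simp [hB]))

/-- If the witness set were inconsistent, boxing the derivation and applying Löb's axiom would
derive `□B` from `w`. -/
theorem exists_R_not_mem (hΦ : ∀ C, C.box ∈ Φ → C ∈ Φ) {w : CanonicalWorld Φ}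
    (hB : B.box ∈ Φ) (hw : B.box ∉ w.carrier) : ∃ u, w.R u ∧ B ∉ u.carrier := by
  set D := Φ.filter fun C => C.box ∈ w.carrier
  have hD : ∀ C, C ∈ D ↔ C.box ∈ w.carrier := fun C => by
    simpa [D] using fun h => hΦ C (w.box_mem_of_mem h)
  set Γ := insert B.neg (insert B.box (D ∪ D.image box))
  have hΓΦ : Γ ⊆ Φ ∪ Φ.image neg := by
    intro C hC
    simp only [Γ, Finset.mem_insert, Finset.mem_union, Finset.mem_image, hD] at hC
    rcases hC with rfl | rfl | hC | ⟨C, hC, rfl⟩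
    · simp [hΦ _ hB]
    · simp [hB]
    · simp [hΦ _ (w.box_mem_of_mem hC)]
    · simp [w.box_mem_of_mem hC]
  have hΓ : GLConsistent Γ := by
    intro h
    have hDB : GLDerives (D ∪ D.image box) (B.box.imp B) := by
      refine GLDerives.insert_iff.1 ((GLDerives.of_provable (GLProv.taut ?_)).mp
        (GLDerives.insert_iff.1 h))
      intro v hb hi
      simp only [neg, hi, hb]
      tauto
    have hwD : ∀ C ∈ (D ∪ D.image box).image box, GLDerives w.carrier C := by
      simp only [Finset.image_union, Finset.mem_union, Finset.mem_image, hD]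
      rintro _ (⟨C, hC, rfl⟩ | ⟨_, ⟨C, hC, rfl⟩, rfl⟩)
      · exact GLDerives.of_mem hC
      · exact (GLDerives.of_provable (GLProv.box_imp_box_box C)).mp (GLDerives.of_mem hC)
    exact hw (w.mem_of_derives hB
      (GLDerives.trans hwD ((GLDerives.of_provable (GLProv.lob B)).mp hDB.box)))
  obtain ⟨u, hu⟩ := exists_superset hΓΦ hΓ
  refine ⟨u, ⟨fun C hC => ⟨hu ?_, hu ?_⟩, B, hu (by simp [Γ]), hw⟩,
    u.not_mem_of_neg_mem (hu (by simp [Γ]))⟩ <;> simp [Γ, hD, hC]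

theorem holds_iff_mem {A : GLForm} (w : CanonicalWorld A.subformulas) (hB : B ∈ A.subformulas) :
    B.Holds R (fun w n => var n ∈ w.carrier) w ↔ B ∈ w.carrier := by
  induction B generalizing w with
  | bot => exact ⟨False.elim, fun h => w.consistent (GLDerives.of_mem h)⟩
  | var n => rfl
  | imp B C ihB ihC =>
    obtain ⟨hB', hC'⟩ := mem_subformulas_of_imp_mem hB
    rw [Holds, ihB w hB', ihC w hC']
    refine ⟨fun h => w.mem_of_derives hB (GLDerives.of_tautCons ?_),
      fun h hBw => w.mem_of_derives hC' ((GLDerives.of_mem h).mp (GLDerives.of_mem hBw))⟩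
    by_cases hBw : B ∈ w.carrier
    · exact fun v _ hi hw => (hi _ _).2 fun _ => hw C (h hBw)
    · have hn := (w.complete B hB').resolve_left hBw
      intro v hb hi hw
      have := hw _ hn
      simp only [neg, hi, hb] at this ⊢
      tauto
  | box B ih =>
    have hB' := mem_subformulas_of_box_mem hB
    simp only [Holds]
    refine ⟨fun h => ?_, fun h u hu => (ih u hB').2 (hu.1 B h).2⟩
    by_contra hw
    obtain ⟨u, hu, hBu⟩ := exists_R_not_mem (fun _ => mem_subformulas_of_box_mem) hB hw
    exact hBu ((ih u hB').1 (h u hu))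

end CanonicalWorld

end GLForm

theorem GLProv.of_forall_holds {A : GLForm}
    (h : ∀ (W : Type) [Finite W] (R : W → W → Prop) [IsTrans W R] [Std.Irrefl R]
      (V : W → ℕ → Prop) (w : W), A.Holds R V w) : GLProv A := by
  by_contra hA
  obtain ⟨w, hw⟩ := CanonicalWorld.exists_superset (Φ := A.subformulas) (Γ := {A.neg})
    (by simp [mem_subformulas_self]) (GLConsistent.singleton_neg hA)
  exact w.not_mem_of_neg_mem (hw (Finset.mem_singleton_self _))
    ((CanonicalWorld.holds_iff_mem w (mem_subformulas_self A)).1 (h _ _ _ w))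

namespace ILForm

variable {W : Type}

def Holds (R : W → W → Prop) (S : W → W → W → Prop) (V : W → ℕ → Prop) :
    W → ILForm → Prop
  | _, bot => False
  | x, var n => V x n
  | x, imp A B => Holds R S V x A → Holds R S V x B
  | x, box A => ∀ y, R x y → Holds R S V y A
  | x, rhd A B => ∀ u, R x u → Holds R S V u A → ∃ v, S x u v ∧ Holds R S V v B

variable {R : W → W → Prop} {S : W → W → W → Prop} {V : W → ℕ → Prop} {x : W}
  {A B : ILForm}

@[simp]
theorem holds_top : top.Holds R S V x :=
  id

theorem holds_conj : (A.conj B).Holds R S V x ↔ A.Holds R S V x ∧ B.Holds R S V x := by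
  simp only [conj, neg, Holds]
  tauto

theorem holds_dia : A.dia.Holds R S V x ↔ ∃ y, R x y ∧ A.Holds R S V y := by
  simp only [dia, neg, Holds]
  grind

theorem holds_dia_top : top.dia.Holds R S V x ↔ ∃ y, R x y := by
  simp [holds_dia]

end ILForm

/-- `S x` is the relation `S_x` of Veltman semantics. -/
structure IsVeltmanFrame {W : Type} (R : W → W → Prop) (S : W → W → W → Prop) : Prop where
  trans : ∀ {x y z}, R x y → R y z → R x z
  wf : WellFounded (Function.swap R)
  R_of_S : ∀ {x u v}, S x u v → R x v
  S_refl : ∀ {x u}, R x u → S x u u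
  S_trans : ∀ {x u v z}, S x u v → S x v z → S x u z
  S_of_R_R : ∀ {x u v}, R x u → R u v → S x u v

theorem ILProv.sound {B : ILForm} (h : ILProv B) {W : Type} {R : W → W → Prop}
    {S : W → W → W → Prop} (hF : IsVeltmanFrame R S) (V : W → ℕ → Prop) (x : W) :
    B.Holds R S V x := by
  induction h generalizing x with
  | taut t => exact t (ILForm.Holds R S V x) Iff.rfl fun _ _ => Iff.rfl
  | distr A B => exact fun hAB hA y hy => hAB y hy (hA y hy)
  | lob A =>
    intro hLob y
    induction y using hF.wf.induction with
    | _ y ih => exact fun hy => hLob y hy fun z hz => ih z hz (hF.trans hy hz)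
  | J1 A B => exact fun hAB u hu hA => ⟨u, hF.S_refl hu, hAB u hu hA⟩
  | J2 A B C =>
    intro h u hu hA
    obtain ⟨hAB, hBC⟩ := ILForm.holds_conj.1 h
    obtain ⟨v, huv, hB⟩ := hAB u hu hA
    obtain ⟨z, hvz, hC⟩ := hBC v (hF.R_of_S huv) hB
    exact ⟨z, hF.S_trans huv hvz, hC⟩
  | J3 A B C =>
    intro h u hu hAB
    obtain ⟨hAC, hBC⟩ := ILForm.holds_conj.1 h
    by_cases hA : A.Holds R S V u
    · exact hAC u hu hA
    · exact hBC u hu (hAB hA)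
  | J4 A B =>
    intro hAB hA
    obtain ⟨y, hy, hA⟩ := ILForm.holds_dia.1 hA
    obtain ⟨v, hyv, hB⟩ := hAB y hy hA
    exact ILForm.holds_dia.2 ⟨v, hF.R_of_S hyv, hB⟩
  | J5 A =>
    intro u hu hA
    obtain ⟨y, hy, hA⟩ := ILForm.holds_dia.1 hA
    exact ⟨y, hF.S_of_R_R hu hy, hA⟩
  | mp _ _ ih₁ ih₂ => exact ih₁ x (ih₂ x)
  | nec _ ih => exact fun y _ => ih y

/-- Each world `w` of a `GL`-model is copied to `(w, main)` and equipped with a dead end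
`(w, leaf)` and a two-step chain `(w, stem) → (w, tip)`. Then `◇◇⊤` singles out the copies
`(w, main)`, and `⊤ ▷ ◇⊤` holds at `(w, main)` iff `S` may move from the dead end to the
chain, which the model allows exactly where `p` holds. -/
inductive GadgetNode
  | main
  | leaf
  | stem
  | tip

namespace GadgetNode

instance : Finite GadgetNode :=
  Finite.of_surjective ![main, leaf, stem, tip] fun t => by
    cases t
    exacts [⟨0, rfl⟩, ⟨1, rfl⟩, ⟨2, rfl⟩, ⟨3, rfl⟩]

variable {W : Type} (R : W → W → Prop)

def rel (x y : W × GadgetNode) : Prop :=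
  match x.2 with
  | main => R x.1 y.1 ∨ (x.1 = y.1 ∧ y.2 ≠ main)
  | stem => x.1 = y.1 ∧ y.2 = tip
  | leaf | tip => False

def srel (P : W → Prop) (x u v : W × GadgetNode) : Prop :=
  rel R x v ∧ (u = v ∨ rel R u v ∨ P x.1)

variable {R}

theorem rel_trans [IsTrans W R] {x y z : W × GadgetNode} (hxy : rel R x y) (hyz : rel R y z) :
    rel R x z := by
  obtain ⟨w, _ | _ | _ | _⟩ := x <;> obtain ⟨u, _ | _ | _ | _⟩ := y <;>
    obtain ⟨t, _ | _ | _ | _⟩ := z <;> simp_all [rel] <;>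
    first | exact _root_.trans hxy hyz | exact Or.inl (hyz.elim (_root_.trans hxy) (· ▸ hxy))

theorem rel_irrefl [Std.Irrefl R] (x : W × GadgetNode) : ¬ rel R x x := by
  obtain ⟨w, _ | _ | _ | _⟩ := x <;> simp [rel, irrefl]

theorem isVeltmanFrame [Finite W] [IsTrans W R] [Std.Irrefl R] (P : W → Prop) :
    IsVeltmanFrame (rel R) (srel R P) where
  trans := rel_trans
  wf := by
    have : IsTrans (W × GadgetNode) (rel R) := ⟨fun _ _ _ => rel_trans⟩
    have : Std.Irrefl (rel R) := ⟨rel_irrefl⟩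
    exact Finite.wellFounded_of_trans_of_irrefl _
  R_of_S h := h.1
  S_refl h := ⟨h, Or.inl rfl⟩
  S_trans := by
    rintro x u v z ⟨-, rfl | huv | hP⟩ ⟨hz, hvz⟩
    · exact ⟨hz, hvz⟩
    · refine ⟨hz, Or.inr ?_⟩
      rcases hvz with rfl | hvz | hP
      exacts [Or.inl huv, Or.inl (rel_trans huv hvz), Or.inr hP]
    · exact ⟨hz, Or.inr (Or.inr hP)⟩
  S_of_R_R h₁ h₂ := ⟨rel_trans h₁ h₂, Or.inr (Or.inl h₂)⟩

variable {P : W → Prop} {U : W × GadgetNode → ℕ → Prop}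

theorem holds_dia_dia_top_iff {x : W × GadgetNode} :
    ILForm.top.dia.dia.Holds (rel R) (srel R P) U x ↔ x.2 = main := by
  rw [ILForm.holds_dia]
  simp only [ILForm.holds_dia_top]
  obtain ⟨w, _ | _ | _ | _⟩ := x
  · exact iff_of_true ⟨(w, stem), Or.inr ⟨rfl, nofun⟩, (w, tip), rfl, rfl⟩ rfl
  all_goals simp [rel]

theorem holds_pDag_iff {w : W} : pDag.Holds (rel R) (srel R P) U (w, main) ↔ P w := by
  simp only [pDag, ILForm.Holds, holds_dia_dia_top_iff, ILForm.holds_dia_top, ILForm.holds_top,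
    forall_const]
  constructor
  · intro h
    obtain ⟨v, ⟨-, hv⟩, y, hy⟩ := h (w, leaf) (Or.inr ⟨rfl, nofun⟩)
    rcases hv with rfl | hv | hP
    exacts [hy.elim, hv.elim, hP]
  · exact fun hP u _ =>
      ⟨(w, stem), ⟨Or.inr ⟨rfl, nofun⟩, Or.inr (Or.inr hP)⟩, (w, tip), rfl, rfl⟩

theorem holds_dag_iff {V : W → ℕ → Prop} {A : GLForm} (hA : A.onlyP) (w : W) :
    (dag A).Holds (rel R) (srel R fun w => V w 0) U (w, main) ↔ A.Holds R V w := by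
  induction A generalizing w with
  | bot => rfl
  | var n =>
    obtain rfl : n = 0 := hA
    exact holds_pDag_iff
  | imp B C ihB ihC => exact imp_congr (ihB hA.1 w) (ihC hA.2 w)
  | box B ih =>
    simp only [dag, GLForm.Holds, ILForm.Holds, holds_dia_dia_top_iff]
    constructor
    · exact fun h u hu => (ih hA u).1 (h (u, main) (Or.inl hu) rfl)
    · rintro h ⟨u, k⟩ hu rfl
      exact (ih hA u).2 (h u (hu.resolve_right fun h => h.2 rfl))

end GadgetNode

/-- If a formula `A` of the modal language with a single unary modality `□`
contains at most the propositional variable `p` and `IL ⊢ A†`, then `GL ⊢ A`. -/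
theorem IL_proves_dag_implies_GL_proves (A : GLForm) (hA : A.onlyP)
    (h : ILProv (dag A)) : GLProv A := by
  refine GLProv.of_forall_holds fun W _ R _ _ V w => ?_
  have hF := GadgetNode.isVeltmanFrame (R := R) fun w => V w 0
  exact (GadgetNode.holds_dag_iff hA w).1 (h.sound hF (fun _ _ => False) (w, .main))
end

section
/- Let N = ⟨W, R, ⊩⟩ be a finite tree-like GL-model with set of end-points E = {e₁, …, e_l}, and let E♭ = {e₁♭, …, e_l♭} and E♮ = {e₁♮, …, e_l♮} be two disjoint copies of E, also disjoint from W. Then there exists a unique Veltman frame ⟨W', R', {S'_x : x ∈ W'}⟩ satisfying: W' = W ⊎ E♭ ⊎ E♮; R' is the transitive closure of R ∪ {(e, e♭) : e ∈ E} ∪ {(e♭, e♮) : e ∈ E}; S'_{e♭} = {(e♮, e♮)} for every e ∈ E; S'_{e♮} = ∅ for every e ∈ E; and for every x ∈ W, S'_x is the smallest transitive and reflexive relation on {y : x R' y} containing both S_x and the restriction of R' to {y : x R' y} such that for every e ∈ E, (e♮, e♭) ∈ S'_x iff N, x ⊩ p and (xRe or x = e). In particular, R' is transitive and conversely well-founded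 and each S'_x satisfies the Veltman frame conditions. -/
/-- Kripke forcing for the language with `□`, over a frame `(W, R)` with
valuation `v` (variable number `0` is the variable `p`). -/
def KSat {W : Type} (R : W → W → Prop) (v : W → ℕ → Prop) : W → GLForm → Prop
  | x, .bot => False
  | x, .var n => v x n
  | x, .imp A B => KSat R v x A → KSat R v x B
  | x, .box A => ∀ y, R x y → KSat R v y A

/-- Veltman forcing for the interpretability language, over `(W, R, S)` with
valuation `v`:  `x ⊩ □A` iff every `R`-successor of `x` forces `A`, and
`x ⊩ A ▷ B` iff every `R`-successor of `x` forcing `A` has an `S x`-successor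
forcing `B`. -/
def ILSat {W : Type} (R : W → W → Prop) (S : W → W → W → Prop)
    (v : W → ℕ → Prop) : W → ILForm → Prop
  | x, .bot => False
  | x, .var n => v x n
  | x, .imp A B => ILSat R S v x A → ILSat R S v x B
  | x, .box A => ∀ y, R x y → ILSat R S v y A
  | x, .rhd A B => ∀ y, R x y → ILSat R S v y A → ∃ z, S x y z ∧ ILSat R S v z B

/-- A `GL`-model: a Kripke model whose accessibility relation is transitive
and conversely well-founded. -/
structure GLModel where
  W : Type
  nonempty : Nonempty W
  R : W → W → Prop
  val : W → ℕ → Prop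
  trans : Transitive R
  cwf : WellFounded (Function.swap R)

/-- A Veltman model (`IL`-model): `R` is transitive and conversely
well-founded, each `S x` is transitive, reflexive on the `R`-successors of
`x`, relates only `R`-successors of `x`, and contains `R` restricted to the
`R`-successors of `x`. -/
structure VeltmanModel where
  W : Type
  nonempty : Nonempty W
  R : W → W → Prop
  S : W → W → W → Prop
  val : W → ℕ → Prop
  R_trans : Transitive R
  R_cwf : WellFounded (Function.swap R)
  S_trans : ∀ x, Transitive (S x)
  S_refl : ∀ x y, R x y → S x y y
  S_dom : ∀ x y z, S x y z → R x y ∧ R x z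
  S_of_R : ∀ x y z, R x y → R y z → S x y z

/-- `e` is an end-point of the model: a world with no `R`-successors. -/
def GLModel.IsEndpoint (N : GLModel) (e : N.W) : Prop := ∀ y, ¬ N.R e y

/-- `N` is a finite tree-like `GL`-model: its set of worlds is finite, it has
a root below every other world, and its (transitive) accessibility relation is
the strict descendant relation of a tree, i.e. the predecessors of any world
are linearly ordered by `R`. -/
def GLModel.FiniteTreeLike (N : GLModel) : Prop :=
  Finite N.W ∧ (∃ r : N.W, ∀ x, x = r ∨ N.R r x) ∧
    ∀ x y z : N.W, N.R x z → N.R y z → (N.R x y ∨ x = y ∨ N.R y x)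

/-- The set `E` of end-points of `N`. -/
def Endpoints (N : GLModel) : Type := {e : N.W // N.IsEndpoint e}

/-- The extended set of worlds `W' = W ⊎ E♭ ⊎ E♮` (two fresh disjoint copies of
the end-points are added). -/
def Wext (N : GLModel) : Type := N.W ⊕ (Endpoints N ⊕ Endpoints N)

/-- The copy of an old world `x ∈ W` inside `W'`. -/
def old (N : GLModel) (x : N.W) : Wext N := Sum.inl x

/-- The world `e♭` added above the end-point `e`. -/
def flatPt (N : GLModel) (e : Endpoints N) : Wext N := Sum.inr (Sum.inl e)

/-- The world `e♮` added above `e♭`. -/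
def natPt (N : GLModel) (e : Endpoints N) : Wext N := Sum.inr (Sum.inr e)

/-- The relation `R ∪ {(e, e♭) : e ∈ E} ∪ {(e♭, e♮) : e ∈ E}` on `W'`,
whose transitive closure is the new accessibility relation `R'`. -/
def baseR (N : GLModel) : Wext N → Wext N → Prop :=
  fun a b =>
    match a, b with
    | Sum.inl x, Sum.inl y => N.R x y
    | Sum.inl x, Sum.inr (Sum.inl e) => x = e.val
    | Sum.inr (Sum.inl e), Sum.inr (Sum.inr e') => e = e'
    | _, _ => False

/-- The new accessibility relation `R'`: the transitive closure of
`R ∪ {(e, e♭) : e ∈ E} ∪ {(e♭, e♮) : e ∈ E}`. -/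
def Rext (N : GLModel) : Wext N → Wext N → Prop := Relation.TransGen (baseR N)

/-- The conditions required of `S'_x` for an old world `x ∈ W`, relative to a
candidate relation `T`: `T` is a transitive and reflexive relation on
`{y : x R' y}` which contains (the original `S_x`, which is empty, and) the
restriction of `R'` to `{y : x R' y}`, and such that for every end-point `e`,
`(e♮, e♭) ∈ T` iff `N, x ⊩ p` and `x R⁼ e`. -/
def OldSCond (N : GLModel) (x : N.W) (T : Wext N → Wext N → Prop) : Prop :=
  Transitive T ∧
  (∀ y, Rext N (old N x) y → T y y) ∧
  (∀ y z, T y z → Rext N (old N x) y ∧ Rext N (old N x) z) ∧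
  (∀ y z, Rext N (old N x) y → Rext N (old N x) z → Rext N y z → T y z) ∧
  (∀ e : Endpoints N,
    T (natPt N e) (flatPt N e) ↔ (N.val x 0 ∧ (N.R x e.val ∨ x = e.val)))

/-- The defining conditions on the family `S'` of the extended frame:
`S'_{e♭} = {(e♮, e♮)}`, `S'_{e♮} = ∅`, and for every old world `x ∈ W`, `S'_x`
is the smallest relation satisfying `OldSCond`. -/
def SCond (N : GLModel) (S' : Wext N → Wext N → Wext N → Prop) : Prop :=
  (∀ (e : Endpoints N) (y z : Wext N),
    S' (flatPt N e) y z ↔ (y = natPt N e ∧ z = natPt N e)) ∧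
  (∀ (e : Endpoints N) (y z : Wext N), ¬ S' (natPt N e) y z) ∧
  (∀ x : N.W, OldSCond N x (S' (old N x)) ∧
    ∀ T : Wext N → Wext N → Prop, OldSCond N x T →
      ∀ y z, S' (old N x) y z → T y z)

/-- The Veltman frame conditions for a frame `(W', R', S')`: `R'` is
transitive and conversely well-founded, each `S'_x` is transitive, reflexive
on the `R'`-successors of `x`, relates only `R'`-successors of `x`, and
`x R' y R' z` implies `y S'_x z`. -/
def VeltmanFrameConds {W' : Type} (R' : W' → W' → Prop)
    (S' : W' → W' → W' → Prop) : Prop :=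
  Transitive R' ∧ WellFounded (Function.swap R') ∧
  (∀ x, Transitive (S' x)) ∧ (∀ x y, R' x y → S' x y y) ∧
  (∀ x y z, S' x y z → R' x y ∧ R' x z) ∧
  (∀ x y z, R' x y → R' y z → S' x y z)

/-!
Every new world lies at most two `baseR`-steps above an end-point, so `R'` is conversely
well-founded because `R` is. The least admissible `S'_x` is explicit: pairs of `R'`-successors
of `x` related by `R'` or equality, together with the pairs `(e♮, e♭)` demanded by the valuation.
It is transitive because `e♮` has no `R'`-successors and `e♭` has only `e♮`; uniqueness is
immediate from minimality.
-/

open Function Relation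

section Extension

variable {N : GLModel} {a b : Wext N} {e : Endpoints N}

lemma not_baseR_natPt_left : ¬ baseR N (natPt N e) b := by
  rcases b with _ | _ | _ <;> exact id

lemma baseR_flatPt_left : baseR N (flatPt N e) b ↔ b = natPt N e := by
  rcases b with _ | _ | _
  · exact ⟨False.elim, nofun⟩
  · exact ⟨False.elim, nofun⟩
  · exact ⟨fun h => h ▸ rfl, fun h => by cases h; rfl⟩

lemma baseR_natPt_right : baseR N a (natPt N e) ↔ a = flatPt N e := by
  rcases a with _ | _ | _
  · exact ⟨False.elim, nofun⟩
  · exact ⟨fun h => h ▸ rfl, fun h => Sum.inl.inj (Sum.inr.inj h)⟩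
  · exact ⟨False.elim, nofun⟩

lemma baseR_flatPt_right : baseR N a (flatPt N e) ↔ a = old N e.val := by
  rcases a with _ | _ | _
  · exact ⟨fun h => h ▸ rfl, Sum.inl.inj⟩
  · exact ⟨False.elim, nofun⟩
  · exact ⟨False.elim, nofun⟩

lemma baseR_old_right {y : N.W} : baseR N a (old N y) ↔ ∃ x, a = old N x ∧ N.R x y := by
  rcases a with x | _ | _
  · exact ⟨fun h => ⟨x, rfl, h⟩, fun ⟨_, hx, h⟩ => Sum.inl.inj hx ▸ h⟩
  · exact ⟨False.elim, fun ⟨_, hx, _⟩ => nomatch hx⟩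
  · exact ⟨False.elim, fun ⟨_, hx, _⟩ => nomatch hx⟩

lemma not_rext_natPt_left : ¬ Rext N (natPt N e) b := fun h =>
  let ⟨_, hc, _⟩ := TransGen.head'_iff.mp h
  not_baseR_natPt_left hc

lemma rext_flatPt_left : Rext N (flatPt N e) b ↔ b = natPt N e := by
  refine ⟨fun h => ?_, fun h => h ▸ TransGen.single rfl⟩
  obtain ⟨c, hc, hcb⟩ := TransGen.head'_iff.mp h
  obtain rfl := baseR_flatPt_left.mp hc
  rcases reflTransGen_iff_eq_or_transGen.mp hcb with rfl | h'
  · rfl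
  · exact (not_rext_natPt_left h').elim

lemma rext_old_right {y : N.W} (h : Rext N a (old N y)) : ∃ x, a = old N x ∧ N.R x y := by
  induction h using TransGen.head_induction_on with
  | single h => exact baseR_old_right.mp h
  | head hac _ ih =>
    obtain ⟨z, rfl, hzy⟩ := ih
    obtain ⟨x, rfl, hxz⟩ := baseR_old_right.mp hac
    exact ⟨x, rfl, N.trans hxz hzy⟩

lemma rext_old_old {x y : N.W} : Rext N (old N x) (old N y) ↔ N.R x y := by
  refine ⟨fun h => ?_, fun h => TransGen.single h⟩
  obtain ⟨z, hz, hzy⟩ := rext_old_right h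
  exact Sum.inl.inj hz ▸ hzy

lemma rext_flatPt_right :
    Rext N a (flatPt N e) ↔ ∃ x, a = old N x ∧ (N.R x e.val ∨ x = e.val) := by
  constructor
  · intro h
    obtain ⟨c, hac, hc⟩ := TransGen.tail'_iff.mp h
    obtain rfl := baseR_flatPt_right.mp hc
    rcases reflTransGen_iff_eq_or_transGen.mp hac with rfl | h'
    · exact ⟨e.val, rfl, Or.inr rfl⟩
    · obtain ⟨x, rfl, hx⟩ := rext_old_right h'
      exact ⟨x, rfl, Or.inl hx⟩
  · rintro ⟨x, rfl, hx | rfl⟩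
    · exact TransGen.tail (rext_old_old.mpr hx) rfl
    · exact TransGen.single rfl

lemma rext_natPt_right : Rext N a (natPt N e) ↔ a = flatPt N e ∨ Rext N a (flatPt N e) := by
  constructor
  · intro h
    obtain ⟨c, hac, hc⟩ := TransGen.tail'_iff.mp h
    obtain rfl := baseR_natPt_right.mp hc
    exact (reflTransGen_iff_eq_or_transGen.mp hac).imp_left Eq.symm
  · rintro (rfl | h)
    · exact TransGen.single rfl
    · exact h.tail rfl

lemma acc_swap_baseR : ∀ a : Wext N, Acc (swap (baseR N)) a := by
  have acc_natPt (e : Endpoints N) : Acc (swap (baseR N)) (natPt N e) :=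
    Acc.intro _ fun _ h => (not_baseR_natPt_left h).elim
  have acc_flatPt (e : Endpoints N) : Acc (swap (baseR N)) (flatPt N e) :=
    Acc.intro _ fun _ h => baseR_flatPt_left.mp h ▸ acc_natPt e
  rintro (x | e | e)
  · induction x using N.cwf.induction with
    | _ x ih =>
      refine Acc.intro _ fun b h => ?_
      rcases b with y | e | e
      · exact ih y h
      · exact acc_flatPt e
      · exact h.elim
  · exact acc_flatPt e
  · exact acc_natPt e

lemma wellFounded_swap_rext : WellFounded (swap (Rext N)) := by
  have : swap (Rext N) = TransGen (swap (baseR N)) := by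
    funext a b
    exact propext transGen_swap.symm
  exact this ▸ (WellFounded.intro acc_swap_baseR).transGen

def oldS (N : GLModel) (x : N.W) (y z : Wext N) : Prop :=
  Rext N (old N x) y ∧ Rext N (old N x) z ∧
    (Rext N y z ∨ y = z ∨
      ∃ e : Endpoints N, y = natPt N e ∧ z = flatPt N e ∧
        N.val x 0 ∧ (N.R x e.val ∨ x = e.val))

def extS (N : GLModel) : Wext N → Wext N → Wext N → Prop
  | Sum.inl x => oldS N x
  | Sum.inr (Sum.inl e) => fun y z => y = natPt N e ∧ z = natPt N e
  | Sum.inr (Sum.inr _) => fun _ _ => False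

lemma transitive_oldS (x : N.W) : Transitive (oldS N x) := by
  rintro y z w ⟨hy, -, hyz⟩ ⟨-, hw, hzw⟩
  refine ⟨hy, hw, ?_⟩
  rcases hyz with hyz | rfl | ⟨e, rfl, rfl, hx⟩
  · rcases hzw with hzw | rfl | ⟨e, rfl, rfl, -⟩
    · exact Or.inl (hyz.trans hzw)
    · exact Or.inl hyz
    · exact (rext_natPt_right.mp hyz).symm.imp_right Or.inl
  · exact hzw
  · rcases hzw with hzw | rfl | ⟨e', he', -⟩
    · exact Or.inr (Or.inl (rext_flatPt_left.mp hzw).symm)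
    · exact Or.inr (Or.inr ⟨e, rfl, rfl, hx⟩)
    · exact nomatch he'

lemma oldSCond_oldS (x : N.W) : OldSCond N x (oldS N x) := by
  refine ⟨transitive_oldS x, fun y hy => ⟨hy, hy, Or.inr (Or.inl rfl)⟩,
    fun y z h => ⟨h.1, h.2.1⟩, fun y z hy hz h => ⟨hy, hz, Or.inl h⟩, fun e => ?_⟩
  constructor
  · rintro ⟨-, -, h | h | ⟨e', he', -, hx⟩⟩
    · exact (not_rext_natPt_left h).elim
    · exact nomatch h
    · cases he'
      exact hx
  · rintro ⟨hv, hx⟩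
    have hflat : Rext N (old N x) (flatPt N e) := rext_flatPt_right.mpr ⟨x, rfl, hx⟩
    exact ⟨rext_natPt_right.mpr (Or.inr hflat), hflat, Or.inr (Or.inr ⟨e, rfl, rfl, hv, hx⟩)⟩

lemma oldS_le {x : N.W} {T : Wext N → Wext N → Prop} (hT : OldSCond N x T) {y z : Wext N}
    (h : oldS N x y z) : T y z := by
  obtain ⟨-, hrefl, -, hR, hnat⟩ := hT
  obtain ⟨hy, hz, h | rfl | ⟨e, rfl, rfl, hx⟩⟩ := h
  · exact hR y z hy hz h
  · exact hrefl y hy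
  · exact (hnat e).mpr hx

lemma sCond_extS : SCond N (extS N) :=
  ⟨fun _ _ _ => Iff.rfl, fun _ _ _ => id, fun x => ⟨oldSCond_oldS x, fun _ hT _ _ => oldS_le hT⟩⟩

lemma SCond.eq_extS {S' : Wext N → Wext N → Wext N → Prop} (hS : SCond N S') :
    S' = extS N := by
  funext a y z
  apply propext
  rcases a with x | e | e
  · exact ⟨(hS.2.2 x).2 _ (oldSCond_oldS x) y z, oldS_le (hS.2.2 x).1⟩
  · exact hS.1 e y z
  · exact iff_of_false (hS.2.1 e y z) id

lemma veltmanFrameConds_extS : VeltmanFrameConds (Rext N) (extS N) := by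
  refine ⟨fun _ _ _ => TransGen.trans, wellFounded_swap_rext, ?_, ?_, ?_, ?_⟩
  · rintro (x | e | e)
    · exact transitive_oldS x
    · rintro _ _ _ ⟨rfl, rfl⟩ ⟨-, rfl⟩
      exact ⟨rfl, rfl⟩
    · exact fun _ _ _ h => h.elim
  · rintro (x | e | e) y hy
    · exact (oldSCond_oldS x).2.1 y hy
    · exact ⟨rext_flatPt_left.mp hy, rext_flatPt_left.mp hy⟩
    · exact (not_rext_natPt_left hy).elim
  · rintro (x | e | e) y z h
    · exact ⟨h.1, h.2.1⟩
    · obtain ⟨rfl, rfl⟩ := h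
      exact ⟨TransGen.single rfl, TransGen.single rfl⟩
    · exact h.elim
  · rintro (x | e | e) y z hy hz
    · exact ⟨hy, hy.trans hz, Or.inl hz⟩
    · obtain rfl := rext_flatPt_left.mp hy
      exact (not_rext_natPt_left hz).elim
    · exact (not_rext_natPt_left hy).elim

end Extension

theorem unique_veltman_frame_extension_general (N : GLModel) :
    (∃! p : (Wext N → Wext N → Prop) × (Wext N → Wext N → Wext N → Prop),
      p.1 = Relation.TransGen (baseR N) ∧ SCond N p.2) ∧
    (∀ (R' : Wext N → Wext N → Prop) (S' : Wext N → Wext N → Wext N → Prop),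
      R' = Relation.TransGen (baseR N) → SCond N S' →
        VeltmanFrameConds R' S') := by
  refine ⟨⟨(Rext N, extS N), ⟨rfl, sCond_extS⟩, ?_⟩, ?_⟩
  · rintro ⟨R', S'⟩ ⟨hR, hS⟩
    exact Prod.ext hR hS.eq_extS
  · rintro R' S' rfl hS
    exact hS.eq_extS ▸ veltmanFrameConds_extS

/-- Let `N = ⟨W, R, ⊩⟩` be a finite tree-like `GL`-model, with end-points `E`
and disjoint fresh copies `E♭`, `E♮` of `E`, and let `W' = W ⊎ E♭ ⊎ E♮`.  Then
there is a unique pair `(R', S')` such that `R'` is the transitive closure of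
`R ∪ {(e, e♭) : e ∈ E} ∪ {(e♭, e♮) : e ∈ E}`, `S'_{e♭} = {(e♮, e♮)}`,
`S'_{e♮} = ∅`, and for every `x ∈ W`, `S'_x` is the smallest transitive and
reflexive relation on `{y : x R' y}` containing both `S_x` (which is empty)
and the restriction of `R'` to `{y : x R' y}`, such that for every end-point
`e`, `(e♮, e♭) ∈ S'_x` iff `N, x ⊩ p` and (`x R e` or `x = e`).  Moreover any
such pair is a Veltman frame: `R'` is transitive and conversely well-founded
and the `S'_x` satisfy the Veltman frame conditions. -/
theorem unique_veltman_frame_extension (N : GLModel) (hN : N.FiniteTreeLike) :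
    (∃! p : (Wext N → Wext N → Prop) × (Wext N → Wext N → Wext N → Prop),
      p.1 = Relation.TransGen (baseR N) ∧ SCond N p.2) ∧
    (∀ (R' : Wext N → Wext N → Prop) (S' : Wext N → Wext N → Wext N → Prop),
      R' = Relation.TransGen (baseR N) → SCond N S' →
        VeltmanFrameConds R' S') :=
  unique_veltman_frame_extension_general N
end
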